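/- arXiv:2408.12544 — 5 statements merged into one kernel-verified Lean document; each statement's English description precedes it below -/
import Mathlib

section
/- For n ≥ 3 and i ≥ 1, the number of independent sets of size i in the cycle graph C_n equals (n/i) · C(n-i-1, i-1) if n ≥ 2i, and 0 otherwise. -/
open Finset SimpleGraph

noncomputable def numIndep {V : Type*} [Fintype V] (G : SimpleGraph V) (i : ℕ) : ℕ :=
  Set.ncard {s : Finset V | s.card = i ∧ ∀ a ∈ s, ∀ b ∈ s, ¬ G.Adj a b}

noncomputable def indepNum {V : Type*} [Fintype V] (G : SimpleGraph V) : ℕ :=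
  sSup {i | ∃ s : Finset V, s.card = i ∧ ∀ a ∈ s, ∀ b ∈ s, ¬ G.Adj a b}

/-!
Rotations act transitively on the vertices of `C_n`, so double counting the pairs (vertex,
independent `i`-set containing it) gives `i · N = n · M`, where `M` counts the independent
`i`-sets through one fixed vertex `v`. Deleting `v` and its two neighbours leaves a path on
`n - 3` vertices, and independent `(i-1)`-sets of a path on `m` vertices are counted by
`C(m + 1 - (i-1), i-1)`, through the recursion `P(m+2, j+1) = P(m+1, j+1) + P(m, j)` obtained by
splitting on whether the last vertex is used. Hence `M = C(n - i - 1, i - 1)`.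
-/

/-- The independent `i`-sets of the path `0 - 1 - ⋯ - (m-1)`. -/
def pathIndepSets (m i : ℕ) : Finset (Finset ℕ) :=
  {t ∈ (range m).powersetCard i | ∀ x ∈ t, x + 1 ∉ t}

lemma mem_pathIndepSets {m i : ℕ} {t : Finset ℕ} :
    t ∈ pathIndepSets m i ↔ t ⊆ range m ∧ #t = i ∧ ∀ x ∈ t, x + 1 ∉ t := by
  rw [pathIndepSets, mem_filter, mem_powersetCard, and_assoc]

lemma pathIndepSets_zero (m : ℕ) : pathIndepSets m 0 = {∅} := by
  simp [pathIndepSets, filter_singleton]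

lemma filter_notMem_pathIndepSets (m i : ℕ) :
    {t ∈ pathIndepSets (m + 1) i | m ∉ t} = pathIndepSets m i := by
  ext t
  simp only [mem_filter, mem_pathIndepSets, subset_iff, mem_range]
  grind

lemma card_filter_mem_pathIndepSets (m j : ℕ) :
    #{t ∈ pathIndepSets (m + 2) (j + 1) | m + 1 ∈ t} = #(pathIndepSets m j) := by
  refine card_nbij' (·.erase (m + 1)) (insert (m + 1)) (fun t ht ↦ ?_) (fun t ht ↦ ?_)
    (fun t ht ↦ insert_erase (mem_filter.1 ht).2) (fun t ht ↦ erase_insert fun h ↦ ?_)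
  all_goals simp only [coe_filter, mem_coe, mem_pathIndepSets, subset_iff, mem_range] at ht ⊢
  all_goals grind

lemma choose_sub_add_choose_sub_succ (a j : ℕ) :
    (a - j).choose j + (a - j).choose (j + 1) = (a + 1 - j).choose (j + 1) := by
  rcases le_or_gt j a with h | h
  · rw [Nat.sub_add_comm h, Nat.choose_succ_succ']
  · rw [Nat.sub_eq_zero_of_le h.le, Nat.sub_eq_zero_of_le h, Nat.choose_zero_succ,
      Nat.choose_eq_zero_of_lt (by omega)]

theorem card_pathIndepSets (m i : ℕ) : #(pathIndepSets m i) = (m + 1 - i).choose i := by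
  induction m using Nat.twoStepInduction generalizing i with
  | zero =>
    cases i
    · simp [pathIndepSets_zero]
    · simp [pathIndepSets]
  | one =>
    rcases i with _ | _ | j
    · simp [pathIndepSets_zero]
    · rfl
    · simp [pathIndepSets]
  | more m ih₀ ih₁ =>
    cases i with
    | zero => simp [pathIndepSets_zero]
    | succ j =>
      rw [← card_filter_add_card_filter_not (p := (m + 1 ∈ ·)), card_filter_mem_pathIndepSets,
        filter_notMem_pathIndepSets, ih₀, ih₁]
      simpa using choose_sub_add_choose_sub_succ (m + 1) j

lemma numIndep_eq_card_indepSetFinset {V : Type*} [Fintype V] [DecidableEq V]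
    (G : SimpleGraph V) [DecidableRel G.Adj] (i : ℕ) :
    numIndep G i = #(G.indepSetFinset i) := by
  rw [numIndep, ← Set.ncard_coe_finset]
  congr 1
  ext s
  rw [Set.mem_ofPred_eq, mem_coe, mem_indepSetFinset_iff, isNIndepSet_iff, isIndepSet_iff,
    and_comm]
  exact and_congr_left'
    ⟨fun h a ha b hb _ ↦ h a ha b hb, fun h a ha b hb hab ↦ h ha hb hab.ne hab⟩

namespace SimpleGraph

variable {V W : Type*} {G : SimpleGraph V} {H : SimpleGraph W}

lemma Iso.isIndepSet_image_iff (φ : G ≃g H) {s : Set V} :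
    H.IsIndepSet (φ '' s) ↔ G.IsIndepSet s := by
  rw [isIndepSet_iff, isIndepSet_iff, φ.injective.injOn.pairwise_image]
  unfold Function.onFun
  simp only [Iso.map_adj_iff]

variable [Fintype V] [DecidableEq V] [DecidableRel G.Adj]

lemma card_filter_mem_indepSetFinset_iso [Fintype W] [DecidableEq W] [DecidableRel H.Adj]
    (φ : G ≃g H) (v : V) (i : ℕ) :
    #{s ∈ H.indepSetFinset i | φ v ∈ s} = #{s ∈ G.indepSetFinset i | v ∈ s} := by
  refine (card_equiv φ.toEquiv.finsetCongr fun s ↦ ?_).symm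
  rw [Equiv.finsetCongr_apply, mem_filter, mem_filter, mem_indepSetFinset_iff,
    mem_indepSetFinset_iff, isNIndepSet_iff, isNIndepSet_iff, coe_map, card_map,
    Equiv.coe_toEmbedding, RelIso.coe_fn_toEquiv, Iso.isIndepSet_image_iff, mem_map_equiv,
    ← RelIso.coe_fn_toEquiv, Equiv.symm_apply_apply]

theorem card_indepSetFinset_mul_eq_of_forall_exists_iso (v : V)
    (h : ∀ w, ∃ φ : G ≃g G, φ v = w) (i : ℕ) :
    #(G.indepSetFinset i) * i = Fintype.card V * #{s ∈ G.indepSetFinset i | v ∈ s} := by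
  have hfiber (w : V) :
      #{s ∈ G.indepSetFinset i | w ∈ s} = #{s ∈ G.indepSetFinset i | v ∈ s} := by
    obtain ⟨φ, rfl⟩ := h w
    exact card_filter_mem_indepSetFinset_iso φ v i
  rw [← sum_card hfiber, sum_const_nat fun s hs ↦ (mem_indepSetFinset_iff.1 hs).card_eq]

def cycleGraph.rotation (n : ℕ) (c : Fin (n + 1)) :
    cycleGraph (n + 1) ≃g cycleGraph (n + 1) where
  toEquiv := Equiv.addRight c
  map_rel_iff' := by
    simp only [cycleGraph_eq_circulantGraph, Equiv.coe_addRight]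
    exact circulantGraph_adj_translate

lemma cycleGraph.exists_iso_apply_eq {n : ℕ} (v w : Fin (n + 1)) :
    ∃ φ : cycleGraph (n + 1) ≃g cycleGraph (n + 1), φ v = w :=
  ⟨rotation n (w - v), add_sub_cancel v w⟩

lemma cycleGraph_adj_iff_val {k : ℕ} {a b : Fin (k + 3)} :
    (cycleGraph (k + 3)).Adj a b ↔
      a.val + 1 = b ∨ b.val + 1 = a ∨
        (a.val = k + 2 ∧ b.val = 0) ∨ (b.val = k + 2 ∧ a.val = 0) := by
  simp only [cycleGraph_adj, sub_eq_iff_eq_add', Fin.ext_iff, Fin.val_add_one, Fin.val_last]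
  split_ifs <;> omega

/-- An independent set through the vertex `k + 1` avoids `k + 2`, so the closing edge
`{k + 2, 0}` of the cycle plays no role. -/
lemma isIndepSet_cycleGraph_iff_of_mem {k : ℕ} {s : Finset (Fin (k + 3))}
    (hs : (⟨k + 1, by omega⟩ : Fin (k + 3)) ∈ s) :
    (cycleGraph (k + 3)).IsIndepSet s ↔
      (∀ a ∈ s, a.val < k + 2) ∧ ∀ a ∈ s, ∀ b ∈ s, a.val + 1 ≠ b.val := by
  simp only [isIndepSet_iff, Set.Pairwise, mem_coe, cycleGraph_adj_iff_val]
  grind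

lemma card_filter_mem_indepSetFinset_cycleGraph (k i : ℕ) :
    #{s ∈ (cycleGraph (k + 3)).indepSetFinset i | (⟨k + 1, by omega⟩ : Fin (k + 3)) ∈ s} =
      #{t ∈ pathIndepSets (k + 2) i | k + 1 ∈ t} := by
  have hrange : (range (k + 3)).powersetCard i =
      ((univ : Finset (Fin (k + 3))).powersetCard i).map
        (mapEmbedding Fin.valEmbedding).toEmbedding := by
    rw [← powersetCard_map, Fin.map_valEmbedding_univ, Nat.Iio_eq_range]
  have hpath : {t ∈ pathIndepSets (k + 2) i | k + 1 ∈ t} =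
      {t ∈ (range (k + 3)).powersetCard i |
        (t ⊆ range (k + 2) ∧ ∀ x ∈ t, x + 1 ∉ t) ∧ k + 1 ∈ t} := by
    ext t
    simp only [mem_filter, mem_pathIndepSets, mem_powersetCard]
    grind
  rw [hpath, hrange, filter_map, card_map]
  congr 1
  ext s
  simp only [mem_filter, mem_indepSetFinset_iff, isNIndepSet_iff, mem_powersetCard,
    Function.comp_apply, RelEmbedding.coe_toEmbedding, mapEmbedding_apply, subset_iff,
    mem_map, mem_range, Fin.valEmbedding_apply, forall_exists_index, and_imp,
    forall_apply_eq_imp_iff₂]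
  grind [isIndepSet_cycleGraph_iff_of_mem]

end SimpleGraph

theorem stmt_2 (n i : ℕ) (hn : 3 ≤ n) (hi : 1 ≤ i) :
    (numIndep (cycleGraph n) i : ℚ) =
      if 2 * i ≤ n then ((n : ℚ) / i) * ((n - i - 1).choose (i - 1)) else 0 := by
  obtain ⟨k, rfl⟩ : ∃ k, n = k + 3 := ⟨n - 3, by omega⟩
  obtain ⟨j, rfl⟩ : ∃ j, i = j + 1 := ⟨i - 1, by omega⟩
  have hcount :
      numIndep (cycleGraph (k + 3)) (j + 1) * (j + 1) = (k + 3) * (k + 1 - j).choose j := by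
    rw [numIndep_eq_card_indepSetFinset, card_indepSetFinset_mul_eq_of_forall_exists_iso _
      (cycleGraph.exists_iso_apply_eq ⟨k + 1, by omega⟩), Fintype.card_fin,
      card_filter_mem_indepSetFinset_cycleGraph, card_filter_mem_pathIndepSets, card_pathIndepSets]
  have hformula : (numIndep (cycleGraph (k + 3)) (j + 1) : ℚ) =
      (k + 3 : ℕ) / (j + 1 : ℕ) * (k + 1 - j).choose j := by
    rw [div_mul_eq_mul_div, eq_div_iff (by positivity)]
    exact_mod_cast hcount
  rw [show k + 3 - (j + 1) - 1 = k + 1 - j by omega, Nat.add_sub_cancel]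
  split_ifs with h
  · exact hformula
  · rw [hformula, Nat.choose_eq_zero_of_lt (by omega), Nat.cast_zero, mul_zero]
end

section
/- Define c_n = ∑_{j=1}^{⌊n/2⌋} (-1)^{j-1} · (n/j) · C(n-j-1, j-1) for n ≥ 3. Then c_n = -1 if n ≡ 0 (mod 6), c_n = 0 if n ≡ 1 or 5 (mod 6), c_n = 2 if n ≡ 2 or 4 (mod 6), and c_n = 3 if n ≡ 3 (mod 6). -/
/-!
Splitting the independent `j`-sets of the cycle `C_n` according to whether they contain a fixed
vertex gives `(n/j)·C(n-j-1, j-1) = C(n-j, j) + C(n-j-1, j-1)`, so `c_n = 1 - F(n) + F(n-2)` where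
`F(m) = antidiagChooseSum (-1) m = ∑_j (-1)^j C(m-j, j)` is the independence polynomial at `-1`
of the path on `m - 1` vertices. Deleting an end vertex of the path gives
`F(m+2) = F(m+1) - F(m)`, hence `F(m+3) = -F(m)`: `F` has period `6`, and the values of `c_n`
are read off `F(0), …, F(5) = 1, 1, 0, -1, -1, 0`.
-/

open Finset

/-- The alternating sum of the numbers of independent sets of each size in the cycle `C n`. -/
noncomputable def cAlt (n : ℕ) : ℚ :=
  ∑ j ∈ Finset.Icc 1 (n / 2),
    (-1 : ℚ) ^ (j - 1) * ((n : ℚ) / (j : ℚ)) * ((n - j - 1).choose (j - 1))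

section CommSemiring

variable {R : Type*} [CommSemiring R]

def antidiagChooseSum (x : R) (m : ℕ) : R :=
  ∑ p ∈ antidiagonal m, x ^ p.1 * (p.2.choose p.1 : R)

@[simp]
theorem antidiagChooseSum_zero (x : R) : antidiagChooseSum x 0 = 1 := by
  simp [antidiagChooseSum]

@[simp]
theorem antidiagChooseSum_one (x : R) : antidiagChooseSum x 1 = 1 := by
  simp [antidiagChooseSum, Nat.sum_antidiagonal_succ]

theorem antidiagChooseSum_add_two (x : R) (m : ℕ) :
    antidiagChooseSum x (m + 2) = antidiagChooseSum x (m + 1) + x * antidiagChooseSum x m := by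
  simp only [antidiagChooseSum]
  rw [Nat.sum_antidiagonal_succ, Nat.sum_antidiagonal_succ', Nat.sum_antidiagonal_succ (n := m)]
  simp only [pow_zero, Nat.choose_zero_right, Nat.cast_one, mul_one, pow_succ',
    Nat.choose_zero_succ, Nat.cast_zero, mul_zero, Nat.choose_succ_succ, Nat.cast_add, mul_add,
    mul_assoc, sum_add_distrib, zero_add, mul_sum]
  ring

theorem antidiagChooseSum_eq_sum_range (x : R) {m K : ℕ} (hK : m / 2 < K) :
    antidiagChooseSum x m = ∑ k ∈ range K, x ^ k * ((m - k).choose k : R) := by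
  have hvanish : ∀ k, m / 2 < k → x ^ k * ((m - k).choose k : R) = 0 := fun k hk => by
    rw [Nat.choose_eq_zero_of_lt (by omega), Nat.cast_zero, mul_zero]
  rw [antidiagChooseSum,
    Nat.sum_antidiagonal_eq_sum_range_succ (fun i j => x ^ i * (j.choose i : R))]
  rcases le_total K (m + 1) with h | h
  · refine (sum_subset (range_subset_range.2 h) fun k _ hk => hvanish k ?_).symm
    simp only [mem_range, not_lt] at hk
    omega
  · refine sum_subset (range_subset_range.2 h) fun k _ hk => hvanish k ?_
    simp only [mem_range, not_lt] at hk
    omega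

end CommSemiring

theorem antidiagChooseSum_neg_one_antiperiodic {R : Type*} [CommRing R] :
    Function.Antiperiodic (antidiagChooseSum (-1 : R)) 3 := fun m => by
  rw [show m + 3 = m + 1 + 2 from rfl, antidiagChooseSum_add_two, antidiagChooseSum_add_two]
  ring

theorem cast_add_add_two_div_mul_choose {K : Type*} [Field K] [CharZero K] (m i : ℕ) :
    ((m + i + 2 : ℕ) : K) / (i + 1) * m.choose i = (m + 1).choose (i + 1) + m.choose i := by
  have h : ((m + 1 : ℕ) : K) * m.choose i = (m + 1).choose (i + 1) * (i + 1) := by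
    exact_mod_cast Nat.add_one_mul_choose_eq m i
  rw [div_mul_eq_mul_div, div_eq_iff (Nat.cast_add_one_ne_zero i)]
  push_cast at h ⊢
  linear_combination h

theorem cAlt_add_two (n : ℕ) :
    cAlt (n + 2) = 1 - antidiagChooseSum (-1 : ℚ) (n + 2) + antidiagChooseSum (-1 : ℚ) n := by
  have hcAlt : cAlt (n + 2) = ∑ i ∈ range (n / 2 + 1),
      ((-1 : ℚ) ^ i * ((n - i + 1).choose (i + 1) : ℚ) +
        (-1 : ℚ) ^ i * ((n - i).choose i : ℚ)) := by
    rw [cAlt, show (n + 2) / 2 = n / 2 + 1 by omega, ← Ico_add_one_right_eq_Icc,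
      sum_Ico_eq_sum_range, add_tsub_cancel_right]
    refine sum_congr rfl fun i hi => ?_
    have hi : i ≤ n := by simp only [mem_range] at hi; omega
    rw [← mul_add, ← cast_add_add_two_div_mul_choose, show n - i + i + 2 = n + 2 by omega,
      show n + 2 - (1 + i) - 1 = n - i by omega, add_tsub_cancel_left, mul_assoc]
    push_cast
    ring
  have hlow : antidiagChooseSum (-1 : ℚ) n =
      ∑ i ∈ range (n / 2 + 1), (-1 : ℚ) ^ i * ((n - i).choose i : ℚ) :=
    antidiagChooseSum_eq_sum_range _ (by omega)
  have hhigh : antidiagChooseSum (-1 : ℚ) (n + 2) =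
      1 - ∑ i ∈ range (n / 2 + 1), (-1 : ℚ) ^ i * ((n - i + 1).choose (i + 1) : ℚ) := by
    rw [antidiagChooseSum_eq_sum_range _ (K := n / 2 + 2) (by omega), sum_range_succ',
      sub_eq_neg_add, ← sum_neg_distrib]
    refine congrArg₂ _ (sum_congr rfl fun i hi => ?_) (by simp)
    have hi : i ≤ n := by simp only [mem_range] at hi; omega
    rw [show n + 2 - (i + 1) = n - i + 1 by omega, pow_succ]
    ring
  rw [hcAlt, sum_add_distrib, hlow, hhigh]
  ring

theorem stmt_8 (n : ℕ) (hn : 3 ≤ n) :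
    (n % 6 = 0 → cAlt n = -1) ∧
    (n % 6 = 1 ∨ n % 6 = 5 → cAlt n = 0) ∧
    (n % 6 = 2 ∨ n % 6 = 4 → cAlt n = 2) ∧
    (n % 6 = 3 → cAlt n = 3) := by
  obtain ⟨m, rfl⟩ : ∃ m, n = m + 2 := ⟨n - 2, by omega⟩
  have hper := (antidiagChooseSum_neg_one_antiperiodic (R := ℚ)).periodic_two_mul
  rw [cAlt_add_two, ← hper.map_mod_nat (m + 2), ← hper.map_mod_nat m,
    show (m + 2) % (2 * 3) = (m % 6 + 2) % 6 by omega, show m % (2 * 3) = m % 6 from rfl]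
  have hm : m % 6 < 6 := Nat.mod_lt _ (by norm_num)
  interval_cases m % 6 <;> norm_num [antidiagChooseSum_add_two]
end

section
/- Define T_n = ∑_{j=1}^{⌈n/2⌉} (-1)^{j-1} · j · C(n-j+1, j). Then T_n = (-1)^k (k+1) if n = 3k+1 or n = 3k+3, and T_n = (-1)^k · 2(k+1) if n = 3k+2, for all k ≥ 0. -/
open Finset

/-- `T n = ∑_{j=1}^{⌈n/2⌉} (-1)^{j-1} j C(n-j+1, j)`. -/
def TAlt (n : ℕ) : ℤ :=
  ∑ j ∈ Finset.Icc 1 ((n + 1) / 2), (-1 : ℤ) ^ (j - 1) * j * ((n - j + 1).choose j)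

def Aalt (n : ℕ) : ℤ := ∑ i ∈ Finset.range (n+1), (-1 : ℤ)^i * ((n-i).choose i)
def Balt (n : ℕ) : ℤ := ∑ i ∈ Finset.range (n+1), (-1 : ℤ)^i * ((n-i).choose (i+1))
def Salt (n : ℕ) : ℤ := ∑ i ∈ Finset.range (n+1), (-1 : ℤ)^i * (i+1) * ((n-i).choose (i+1))
def Dalt (n : ℕ) : ℤ := ∑ i ∈ Finset.range (n+1), (-1 : ℤ)^i * (i+1) * ((n-i).choose i)

lemma Aalt_succ (n : ℕ) : Aalt (n+1) = 1 - Balt n := by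
  rw [Aalt, Finset.sum_range_succ']
  simp only [Nat.succ_sub_succ, pow_succ, Nat.sub_zero, Nat.choose_zero_right]
  have : ∑ x ∈ range (n+1), (-1:ℤ) ^ x * -1 * ((n - x).choose (x + 1) : ℤ)
      = ∑ x ∈ range (n+1), -((-1:ℤ) ^ x * ((n - x).choose (x + 1) : ℤ)) := by
    apply Finset.sum_congr rfl; intro i _; ring
  rw [this, Finset.sum_neg_distrib, Balt]
  push_cast; ring

lemma Aalt_rec (n : ℕ) : Aalt (n+2) = Aalt (n+1) - Aalt n := by
  have h1 : Aalt (n+2) = 1 - Aalt n - Balt n := by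
    rw [show n+2 = (n+1)+1 from rfl, Aalt, Finset.sum_range_succ']
    simp only [Nat.succ_sub_succ, Nat.sub_zero, Nat.choose_zero_right]
    rw [Finset.sum_range_succ]
    have hz : ((n+1) - (n+1)).choose (n+1+1) = 0 := by simp
    rw [hz]
    have hstep : ∀ i ∈ Finset.range (n+1),
        (-1:ℤ)^(i+1) * (((n+1) - i).choose (i+1) : ℤ)
          = -((-1:ℤ)^i * ((n-i).choose i : ℤ)) + -((-1:ℤ)^i * ((n-i).choose (i+1) : ℤ)) := by
      intro i hi
      rw [Finset.mem_range] at hi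
      have h : (n+1) - i = (n-i) + 1 := by omega
      rw [h, Nat.choose_succ_succ]
      push_cast
      ring
    rw [Finset.sum_congr rfl hstep, Finset.sum_add_distrib,
      Finset.sum_neg_distrib, Finset.sum_neg_distrib, ← Aalt, ← Balt]
    push_cast; ring
  rw [h1, Aalt_succ n]; ring

lemma Dalt_succ (m : ℕ) : Dalt (m+1) = Aalt (m+1) - Salt m := by
  have hstep : ∀ i ∈ Finset.range (m+2),
      (-1:ℤ)^i * (i+1) * (((m+1)-i).choose i : ℤ)
        = (-1:ℤ)^i * i * (((m+1)-i).choose i : ℤ) + (-1:ℤ)^i * (((m+1)-i).choose i : ℤ) := by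
    intro i _; push_cast; ring
  rw [Dalt, Finset.sum_congr rfl hstep, Finset.sum_add_distrib, ← Aalt]
  have hE : ∑ i ∈ Finset.range (m+2), (-1:ℤ)^i * i * (((m+1)-i).choose i : ℤ) = -Salt m := by
    rw [Finset.sum_range_succ']
    simp only [Nat.succ_sub_succ, Nat.cast_zero, mul_zero, zero_mul, add_zero]
    have : ∀ i ∈ Finset.range (m+1),
        (-1:ℤ)^(i+1) * ((i+1:ℕ) : ℤ) * ((m-i).choose (i+1) : ℤ)
          = -((-1:ℤ)^i * (i+1) * ((m-i).choose (i+1) : ℤ)) := by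
      intro i _; push_cast; ring
    rw [Finset.sum_congr rfl this, Finset.sum_neg_distrib, ← Salt]
  rw [hE]; ring

lemma Salt_rec (n : ℕ) : Salt (n+2) = Salt (n+1) - Salt n + Aalt (n+1) := by
  rw [show n+2 = (n+1)+1 from rfl, Salt, Finset.sum_range_succ]
  have hz : (((n+1)+1) - ((n+1)+1)).choose ((n+1)+1+1) = 0 := by simp
  rw [hz]
  have hstep : ∀ i ∈ Finset.range (n+2),
      (-1:ℤ)^i * (i+1) * ((((n+1)+1)-i).choose (i+1) : ℤ)
        = (-1:ℤ)^i * (i+1) * (((n+1)-i).choose i : ℤ)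
          + (-1:ℤ)^i * (i+1) * (((n+1)-i).choose (i+1) : ℤ) := by
    intro i hi
    rw [Finset.mem_range] at hi
    have h : ((n+1)+1) - i = ((n+1)-i) + 1 := by omega
    rw [h, Nat.choose_succ_succ]
    push_cast; ring
  rw [Finset.sum_congr rfl hstep, Finset.sum_add_distrib, ← Dalt, ← Salt, Dalt_succ]
  push_cast; ring

lemma TAlt_eq (n : ℕ) : TAlt n = Salt n := by
  have h1 : TAlt n = ∑ j ∈ Finset.Icc 1 n,
      (-1 : ℤ) ^ (j - 1) * j * ((n - j + 1).choose j) := by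
    rw [TAlt]
    apply Finset.sum_subset (Finset.Icc_subset_Icc_right (by omega))
    intro j hj hnot
    rw [Finset.mem_Icc] at hj
    rw [Finset.mem_Icc] at hnot
    have hlt : n - j + 1 < j := by omega
    rw [Nat.choose_eq_zero_of_lt hlt]
    simp
  rw [h1, ← Finset.Ico_add_one_right_eq_Icc, Finset.sum_Ico_eq_sum_range]
  rw [Salt, Finset.sum_range_succ]
  have hz : ((n - n).choose (n+1)) = 0 := by simp
  rw [hz]
  simp only [Nat.cast_zero, mul_zero, add_zero, Nat.add_sub_cancel]
  apply Finset.sum_congr rfl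
  intro i hi
  rw [Finset.mem_range] at hi
  have h2 : 1 + i - 1 = i := by omega
  have h3 : n - (1 + i) + 1 = n - i := by omega
  have h4 : 1 + i = i + 1 := by omega
  rw [h2, h3, h4]
  push_cast; ring

lemma Aalt_anti (n : ℕ) : Aalt (n+3) = -Aalt n := by
  have h1 := Aalt_rec (n+1)
  have h2 := Aalt_rec n
  have e : n+1+2 = n+3 := by ring
  rw [e] at h1
  rw [h1, h2]; ring

lemma Aalt_vals (k : ℕ) :
    Aalt (3*k+3) = -(-1:ℤ)^k ∧ Aalt (3*k+4) = -(-1:ℤ)^k ∧ Aalt (3*k+5) = 0 := by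
  induction k with
  | zero =>
      refine ⟨?_, ?_, ?_⟩ <;> simp [Aalt, Finset.sum_range_succ, Nat.choose]
  | succ k ih =>
      obtain ⟨h3, h4, h5⟩ := ih
      refine ⟨?_, ?_, ?_⟩
      · have := Aalt_anti (3*k+3)
        rw [show 3*k+3+3 = 3*(k+1)+3 from by ring] at this
        rw [this, h3]; ring
      · have := Aalt_anti (3*k+4)
        rw [show 3*k+4+3 = 3*(k+1)+4 from by ring] at this
        rw [this, h4]; ring
      · have := Aalt_anti (3*k+5)
        rw [show 3*k+5+3 = 3*(k+1)+5 from by ring] at this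
        rw [this, h5]; ring

lemma Salt_vals (k : ℕ) :
    Salt (3*k+1) = (-1:ℤ)^k * (k+1) ∧ Salt (3*k+2) = (-1:ℤ)^k * 2 * (k+1) ∧
      Salt (3*k+3) = (-1:ℤ)^k * (k+1) := by
  induction k with
  | zero =>
      refine ⟨?_, ?_, ?_⟩ <;> simp [Salt, Finset.sum_range_succ, Nat.choose] <;> norm_num
  | succ k ih =>
      obtain ⟨h1, h2, h3⟩ := ih
      obtain ⟨a3, a4, a5⟩ := Aalt_vals k
      have r1 : Salt (3*k+4) = Salt (3*k+3) - Salt (3*k+2) + Aalt (3*k+3) := by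
        have := Salt_rec (3*k+2)
        rw [show 3*k+2+2 = 3*k+4 from by ring, show 3*k+2+1 = 3*k+3 from by ring] at this
        exact this
      have r2 : Salt (3*k+5) = Salt (3*k+4) - Salt (3*k+3) + Aalt (3*k+4) := by
        have := Salt_rec (3*k+3)
        rw [show 3*k+3+2 = 3*k+5 from by ring, show 3*k+3+1 = 3*k+4 from by ring] at this
        exact this
      have r3 : Salt (3*k+6) = Salt (3*k+5) - Salt (3*k+4) + Aalt (3*k+5) := by
        have := Salt_rec (3*k+4)
        rw [show 3*k+4+2 = 3*k+6 from by ring, show 3*k+4+1 = 3*k+5 from by ring] at this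
        exact this
      have v4 : Salt (3*k+4) = (-1:ℤ)^(k+1) * (k+2) := by
        rw [r1, h2, h3, a3]; ring
      have v5 : Salt (3*k+5) = (-1:ℤ)^(k+1) * 2 * (k+2) := by
        rw [r2, v4, h3, a4]; ring
      have v6 : Salt (3*k+6) = (-1:ℤ)^(k+1) * (k+2) := by
        rw [r3, v5, v4, a5]; ring
      refine ⟨?_, ?_, ?_⟩
      · rw [show 3*(k+1)+1 = 3*k+4 from by ring, v4]; push_cast; ring
      · rw [show 3*(k+1)+2 = 3*k+5 from by ring, v5]; push_cast; ring
      · rw [show 3*(k+1)+3 = 3*k+6 from by ring, v6]; push_cast; ring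

theorem stmt_9 (k : ℕ) :
    TAlt (3 * k + 1) = (-1 : ℤ) ^ k * (k + 1) ∧
    TAlt (3 * k + 3) = (-1 : ℤ) ^ k * (k + 1) ∧
    TAlt (3 * k + 2) = (-1 : ℤ) ^ k * 2 * (k + 1) := by
  obtain ⟨h1, h2, h3⟩ := Salt_vals k
  exact ⟨by rw [TAlt_eq, h1], by rw [TAlt_eq, h3], by rw [TAlt_eq, h2]⟩
end

section
/- Define T_n = ∑_{j=1}^{⌈n/2⌉} (-1)^{j-1} · j · C(n-j+1, j) and p_n = ∑_{j=1}^{⌈n/2⌉} (-1)^{j-1} · C(n-j+1, j). Then for all n ≥ 1, T_{n+2} - T_{n+1} + T_n = 1 - p_n. -/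
open Finset

/-- `p n = ∑_{j=1}^{⌈n/2⌉} (-1)^{j-1} C(n-j+1, j)`. -/
def pAlt (n : ℕ) : ℤ :=
  ∑ j ∈ Finset.Icc 1 ((n + 1) / 2), (-1 : ℤ) ^ (j - 1) * ((n - j + 1).choose j)

/-!
Let `I n = ∑_j C(n-j+1, j) X^j` be the independence polynomial of the path `P_n`. Deleting
or keeping the last vertex gives `I (n+2) = I (n+1) + X * I n`. Since `p n = 1 - I n (-1)` and
`T n = I' n (-1)`, differentiating the recurrence and evaluating at `-1` gives the identity.
-/

open Polynomial

noncomputable def pathIndepPoly : ℕ → ℤ[X]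
  | 0 => 1
  | 1 => 1 + X
  | n + 2 => pathIndepPoly (n + 1) + X * pathIndepPoly n

theorem pathIndepPoly_add_two (n : ℕ) :
    pathIndepPoly (n + 2) = pathIndepPoly (n + 1) + X * pathIndepPoly n := rfl

theorem coeff_pathIndepPoly (n j : ℕ) :
    (pathIndepPoly n).coeff j = ((n + 1 - j).choose j : ℤ) := by
  induction n using Nat.strong_induction_on generalizing j with
  | _ n ih =>
  match n, j with
  | 0, 0 | 0, _ + 1 | 1, 0 | 1, 1 | 1, _ + 2 => simp [pathIndepPoly, coeff_one, coeff_X]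
  | n + 2, 0 => simp [pathIndepPoly_add_two, ih (n + 1) (by omega)]
  | n + 2, k + 1 =>
    rw [pathIndepPoly_add_two, coeff_add, coeff_X_mul, ih (n + 1) (by omega), ih n (by omega)]
    norm_cast
    rcases le_or_gt k (n + 1) with hk | hk
    · rw [show n + 2 + 1 - (k + 1) = (n + 1 - k) + 1 by omega, Nat.choose_succ_succ',
        show n + 1 + 1 - (k + 1) = n + 1 - k by omega, add_comm]
    · simp [show n + 1 - k = 0 by omega, show n + 2 - k = 0 by omega, Nat.choose_zero_succ,
        Nat.choose_eq_zero_of_lt (show 0 < k by omega)]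

theorem natDegree_pathIndepPoly_le (n : ℕ) : (pathIndepPoly n).natDegree ≤ n := by
  refine natDegree_le_iff_coeff_eq_zero.2 fun j hj => ?_
  rw [coeff_pathIndepPoly, show n + 1 - j = 0 by omega, Nat.choose_eq_zero_of_lt (by omega)]
  rfl

theorem sum_Icc_choose_eq_sum_range (g : ℕ → ℤ) (n : ℕ) :
    ∑ j ∈ Icc 1 ((n + 1) / 2), g j * (n - j + 1).choose j =
      ∑ i ∈ range n, g (i + 1) * (n - i).choose (i + 1) := by
  calc ∑ j ∈ Icc 1 ((n + 1) / 2), g j * (n - j + 1).choose j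
      = ∑ i ∈ range ((n + 1) / 2), g (i + 1) * (n - (i + 1) + 1).choose (i + 1) := by
        rw [range_eq_Ico, sum_Ico_add' (fun j => g j * ((n - j + 1).choose j : ℤ)), zero_add,
          Ico_add_one_right_eq_Icc]
    _ = ∑ i ∈ range ((n + 1) / 2), g (i + 1) * (n - i).choose (i + 1) :=
        sum_congr rfl fun i hi => by
          rw [mem_range] at hi
          rw [show n - (i + 1) + 1 = n - i by omega]
    _ = ∑ i ∈ range n, g (i + 1) * (n - i).choose (i + 1) := by
        refine sum_subset (range_subset_range.2 (by omega)) fun i _ hi => ?_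
        rw [mem_range, not_lt] at hi
        rw [Nat.choose_eq_zero_of_lt (by omega), Nat.cast_zero, mul_zero]

theorem pathIndepPoly_eval_neg_one (n : ℕ) : (pathIndepPoly n).eval (-1) = 1 - pAlt n := by
  rw [eval_eq_sum_range' (Nat.lt_succ_of_le (natDegree_pathIndepPoly_le n)), sum_range_succ',
    pAlt, sum_Icc_choose_eq_sum_range (fun j => (-1) ^ (j - 1)), sub_eq_neg_add,
    ← sum_neg_distrib]
  congr 1
  · refine sum_congr rfl fun i _ => ?_
    rw [coeff_pathIndepPoly, Nat.add_sub_add_right, Nat.add_sub_cancel, pow_succ]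
    ring
  · simp [coeff_pathIndepPoly]

theorem derivative_pathIndepPoly_eval_neg_one (n : ℕ) :
    (derivative (pathIndepPoly n)).eval (-1) = TAlt n := by
  have hdeg : (derivative (pathIndepPoly n)).natDegree < n + 1 :=
    (natDegree_derivative_le _).trans_lt (by have := natDegree_pathIndepPoly_le n; omega)
  rw [eval_eq_sum_range' hdeg, sum_range_succ, TAlt,
    sum_Icc_choose_eq_sum_range (fun j => (-1) ^ (j - 1) * j)]
  simp only [coeff_derivative, coeff_pathIndepPoly, Nat.add_sub_add_right, Nat.sub_self,
    Nat.choose_zero_succ, Nat.cast_zero, zero_mul, add_zero, Nat.add_sub_cancel, Nat.cast_succ]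
  exact sum_congr rfl fun i _ => by ring

theorem stmt_10_general (n : ℕ) :
    TAlt (n + 2) - TAlt (n + 1) + TAlt n = 1 - pAlt n := by
  have h := congrArg (fun q => (derivative q).eval (-1)) (pathIndepPoly_add_two n)
  simp only [derivative_add, derivative_mul, derivative_X, one_mul, eval_add, eval_mul,
    eval_X, derivative_pathIndepPoly_eval_neg_one, pathIndepPoly_eval_neg_one] at h
  linarith

theorem stmt_10 (n : ℕ) (hn : 1 ≤ n) :
    TAlt (n + 2) - TAlt (n + 1) + TAlt n = 1 - pAlt n :=
  stmt_10_general n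
end

section
/- Let G be a finite simple graph with independence number α and let g_j be the number of independent sets of size j in G. Set g = ∑_{j=1}^{α} (-1)^{j-1} g_j. Then the degree of the h-polynomial of R/I(G) equals α if and only if g ≠ 1. -/
open Finset SimpleGraph

/-- The edge ideal of a finite simple graph on vertices `x_0, …, x_{n-1}`. -/
noncomputable def edgeIdeal (k : Type*) [Field k] {n : ℕ} (G : SimpleGraph (Fin n)) :
    Ideal (MvPolynomial (Fin n) k) :=
  Ideal.span {p | ∃ i j, G.Adj i j ∧ p = MvPolynomial.X i * MvPolynomial.X j}

/-- The Hilbert function of `R/I(G)`: the `k`-dimension of the degree-`d` graded piece. -/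
noncomputable def hilbertFunction (k : Type*) [Field k] {n : ℕ} (G : SimpleGraph (Fin n))
    (d : ℕ) : ℕ :=
  Module.finrank k (Submodule.map (Ideal.Quotient.mkₐ k (edgeIdeal k G)).toLinearMap
    (MvPolynomial.homogeneousSubmodule (Fin n) k d))

/-- The Hilbert series of `R/I(G)`, as a power series with rational coefficients. -/
noncomputable def hilbertSeries (k : Type*) [Field k] {n : ℕ} (G : SimpleGraph (Fin n)) :
    PowerSeries ℚ :=
  PowerSeries.mk fun d => (hilbertFunction k G d : ℚ)

/-!
`R/I(G)` is the Stanley–Reisner ring of the independence complex of `G`: the monomials outside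
`I(G)` are those whose support is an independent set, and they form a basis of every graded
piece. Sorting them by support gives `H(t) = ∑ₛ (t / (1 - t))^|s|` over the independent sets `s`,
so `(1 - t)^α H(t) = ∑ₛ t^|s| (1 - t)^(α - |s|)`, a polynomial of degree at most `α` whose value
`g_α` at `t = 1` is nonzero. Comparing with `(1 - t)^d H(t) = h(t)`, `h(1) ≠ 0`, forces `d = α`
and `h` equal to this polynomial, whose coefficient of `t^α` is
`(-1)^α ∑ₛ (-1)^|s| = (-1)^α (1 - g)`.
-/

namespace Polynomial

variable {R : Type*}

theorem coeff_one_sub_X_pow_self [CommRing R] (m : ℕ) :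
    ((1 - X : R[X]) ^ m).coeff m = (-1) ^ m := by
  rw [show (1 - X : R[X]) = C (-1) * (X + C (-1)) by simp; ring, mul_pow, ← C_pow, coeff_C_mul,
    coeff_X_add_C_pow]
  simp

theorem natDegree_eq_iff_coeff_ne_zero [Semiring R] {p : R[X]} {n : ℕ} (hp : p ≠ 0)
    (hn : p.natDegree ≤ n) : p.natDegree = n ↔ p.coeff n ≠ 0 :=
  ⟨fun h => h ▸ leadingCoeff_ne_zero.mpr hp, natDegree_eq_of_le_of_coeff_ne_zero hn⟩

theorem eq_of_mul_one_sub_X_pow_eq [CommRing R] [IsDomain R] {p q : R[X]} {a b : ℕ}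
    (hp : p.eval 1 ≠ 0) (hq : q.eval 1 ≠ 0) (h : p * (1 - X) ^ a = q * (1 - X) ^ b) :
    a = b ∧ p = q := by
  have h1X : (1 - X : R[X]) ≠ 0 := fun h0 => by simpa using congrArg (eval 0) h0
  wlog hab : a ≤ b generalizing p q a b
  · obtain ⟨hba, hqp⟩ := this hq hp h.symm (by omega)
    exact ⟨hba.symm, hqp.symm⟩
  obtain ⟨c, rfl⟩ := Nat.exists_eq_add_of_le hab
  have hpq : p = (1 - X) ^ c * q :=
    mul_right_cancel₀ (pow_ne_zero a h1X) (by rw [h, pow_add]; ring)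
  obtain rfl | hc := Nat.eq_zero_or_pos c
  · simpa using hpq
  · exact absurd (by simp [hpq, zero_pow hc.ne']) hp

end Polynomial

theorem neg_one_pow_mul_neg_one_pow_sub {R : Type*} [Monoid R] [HasDistribNeg R] {a b : ℕ}
    (h : b ≤ a) : (-1 : R) ^ a * (-1) ^ (a - b) = (-1) ^ b := by
  rw [← pow_add, show a + (a - b) = b + 2 * (a - b) by omega, pow_add, pow_mul, neg_one_sq,
    one_pow, mul_one]

theorem Finsupp.single_add_single_le_iff {V : Type*} {i j : V} (hij : i ≠ j) {m : V →₀ ℕ} :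
    single i 1 + single j 1 ≤ m ↔ m i ≠ 0 ∧ m j ≠ 0 := by
  constructor
  · intro h
    have hi := h i
    have hj := h j
    simp [hij, hij.symm] at hi hj
    omega
  · rintro ⟨hi, hj⟩ x
    by_cases hxi : x = i
    · subst hxi; simp [hij]; omega
    by_cases hxj : x = j
    · subst hxj; simp [hxi]; omega
    simp [Ne.symm hxi, Ne.symm hxj]

namespace PowerSeries

variable {σ R : Type*}

theorem coeff_X_mul_mk_one [CommSemiring R] (j : ℕ) :
    coeff j (X * PowerSeries.mk 1 : R⟦X⟧) = if j ≠ 0 then 1 else 0 := by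
  rcases j with _ | j <;> simp [coeff_succ_X_mul]

theorem coeff_X_mul_mk_one_pow_card [CommSemiring R] [DecidableEq σ] (s : Finset σ) (d : ℕ) :
    coeff d ((X * PowerSeries.mk 1 : R⟦X⟧) ^ #s) =
      #{m ∈ finsuppAntidiag s d | ∀ i ∈ s, m i ≠ 0} := by
  rw [← prod_const, coeff_prod]
  simp only [coeff_X_mul_mk_one]
  rw [sum_congr rfl fun l _ => prod_boole, sum_boole]

/-- The monomials with support exactly `s` have generating function `(X / (1 - X)) ^ #s`. -/
theorem mk_card_filter_support [CommSemiring R] [Fintype σ] [DecidableEq σ]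
    (P : Finset σ → Prop) [DecidablePred P] :
    PowerSeries.mk (fun d => (#{m ∈ finsuppAntidiag (univ : Finset σ) d | P m.support} : R)) =
      ∑ s with P s, (X * PowerSeries.mk 1) ^ #s := by
  ext d
  rw [coeff_mk, map_sum]
  simp only [coeff_X_mul_mk_one_pow_card]
  rw [card_eq_sum_card_fiberwise (f := Finsupp.support) (t := {s | P s})
    fun m hm => mem_filter.mpr ⟨mem_univ _, (mem_filter.mp hm).2⟩]
  push_cast
  refine sum_congr rfl fun s hs => congrArg _ (congrArg _ ?_)
  ext m
  simp only [mem_filter, mem_finsuppAntidiag', subset_univ, and_true]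
  constructor
  · rintro ⟨⟨hd, -⟩, rfl⟩
    exact ⟨⟨hd, subset_rfl⟩, fun i hi => Finsupp.mem_support_iff.mp hi⟩
  · rintro ⟨⟨hd, hsub⟩, hne⟩
    have hms : m.support = s := hsub.antisymm fun i hi => Finsupp.mem_support_iff.mpr (hne i hi)
    exact ⟨⟨hd, hms ▸ (mem_filter.mp hs).2⟩, hms⟩

theorem one_sub_X_pow_mul_X_mul_mk_one_pow [CommRing R] {a b : ℕ} (h : b ≤ a) :
    (1 - X : R⟦X⟧) ^ a * (X * PowerSeries.mk 1) ^ b = X ^ b * (1 - X) ^ (a - b) := by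
  have hX : (1 - X : R⟦X⟧) * (X * PowerSeries.mk 1) = X := by
    rw [mul_left_comm, mul_comm _ (PowerSeries.mk 1), mk_one_mul_one_sub_eq_one, mul_one]
  nth_rw 1 [← Nat.sub_add_cancel h]
  rw [pow_add, mul_assoc, ← mul_pow, hX, mul_comm]

theorem eq_of_one_sub_X_pow_mul_eq [CommRing R] [IsDomain R] {F : R⟦X⟧} {p q : Polynomial R}
    {a b : ℕ} (hp : p.eval 1 ≠ 0) (hq : q.eval 1 ≠ 0) (hpF : (1 - X : R⟦X⟧) ^ a * F = p)
    (hqF : (1 - X : R⟦X⟧) ^ b * F = q) : a = b ∧ p = q := by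
  have hba := Polynomial.eq_of_mul_one_sub_X_pow_eq (a := b) (b := a) hp hq
    (Polynomial.coe_injective R ?_)
  · exact ⟨hba.1.symm, hba.2⟩
  simp only [Polynomial.coe_mul, Polynomial.coe_pow, Polynomial.coe_sub, Polynomial.coe_one,
    Polynomial.coe_X]
  rw [← hpF, ← hqF]
  ring

end PowerSeries

namespace MvPolynomial

variable {σ k : Type*} [Field k]

theorem homogeneousSubmodule_eq_span_monomial (d : ℕ) :
    homogeneousSubmodule σ k d =
      Submodule.span k ((fun m => monomial m (1 : k)) '' {m | m.degree = d}) := by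
  rw [homogeneousSubmodule_eq_finsupp_supported]
  exact restrictSupport_eq_span _ _

theorem monomial_mem_ideal_span_monomial_image {E : Set (σ →₀ ℕ)} {e m : σ →₀ ℕ} (he : e ∈ E)
    (hle : e ≤ m) : monomial m (1 : k) ∈ Ideal.span ((fun m => monomial m (1 : k)) '' E) := by
  rw [mem_ideal_span_monomial_image]
  intro m' hm'
  exact ⟨e, he, mem_singleton.mp (support_monomial_subset hm') ▸ hle⟩

theorem linearIndependent_mk_monomial {E S : Set (σ →₀ ℕ)} (hS : ∀ m ∈ S, ∀ e ∈ E, ¬ e ≤ m) :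
    LinearIndependent k fun m : S =>
      (Ideal.Quotient.mkₐ k (Ideal.span ((fun m => monomial m (1 : k)) '' E))).toLinearMap
        (monomial (m : σ →₀ ℕ) 1) := by
  have hmono : LinearIndependent k fun m : S => monomial (m : σ →₀ ℕ) (1 : k) :=
    (basisMonomials σ k).linearIndependent.comp _ Subtype.val_injective
  refine hmono.map (Submodule.disjoint_def.mpr fun p hp hpI => ?_)
  have hsupp : (p.support : Set (σ →₀ ℕ)) ⊆ S := by
    rwa [← mem_restrictSupport_iff, restrictSupport_eq_span, Set.image_eq_range]
  rw [LinearMap.mem_ker, AlgHom.toLinearMap_apply, Ideal.Quotient.mkₐ_eq_mk,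
    Ideal.Quotient.eq_zero_iff_mem, mem_ideal_span_monomial_image] at hpI
  by_contra hp0
  obtain ⟨m, hm⟩ := support_nonempty.mpr hp0
  obtain ⟨e, he, hle⟩ := hpI m hm
  exact hS m (hsupp hm) e he hle

/-- The monomials divisible by no generator of a monomial ideal `I` form a basis of each graded
piece of `R/I`. -/
theorem finrank_map_homogeneousSubmodule_quotient_span_monomial [Fintype σ] [DecidableEq σ]
    (E : Set (σ →₀ ℕ)) [DecidablePred fun m : σ →₀ ℕ => ∀ e ∈ E, ¬ e ≤ m] (d : ℕ) :
    Module.finrank k ((homogeneousSubmodule σ k d).map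
      (Ideal.Quotient.mkₐ k (Ideal.span ((fun m => monomial m (1 : k)) '' E))).toLinearMap) =
      #{m ∈ finsuppAntidiag (univ : Finset σ) d | ∀ e ∈ E, ¬ e ≤ m} := by
  set q := (Ideal.Quotient.mkₐ k (Ideal.span ((fun m => monomial m (1 : k)) '' E))).toLinearMap
  set std := {m ∈ finsuppAntidiag (univ : Finset σ) d | ∀ e ∈ E, ¬ e ≤ m}
  have hli : LinearIndependent k fun m : (std : Set (σ →₀ ℕ)) => q (monomial (m : σ →₀ ℕ) 1) :=
    linearIndependent_mk_monomial fun m hm => (mem_filter.mp hm).2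
  have hspan : (homogeneousSubmodule σ k d).map q =
      Submodule.span k (Set.range fun m : (std : Set (σ →₀ ℕ)) => q (monomial (m : σ →₀ ℕ) 1)) := by
    rw [homogeneousSubmodule_eq_span_monomial, Submodule.map_span]
    apply le_antisymm
    · rw [Submodule.span_le]
      rintro _ ⟨_, ⟨m, hm, rfl⟩, rfl⟩
      by_cases hstd : ∀ e ∈ E, ¬ e ≤ m
      · have hm_std : m ∈ std :=
          mem_filter.mpr ⟨by simpa [Finsupp.degree_eq_sum] using hm, hstd⟩
        exact Submodule.subset_span ⟨⟨m, hm_std⟩, rfl⟩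
      · obtain ⟨e, he, hle⟩ : ∃ e ∈ E, e ≤ m := by simpa using hstd
        rw [SetLike.mem_coe, AlgHom.toLinearMap_apply, Ideal.Quotient.mkₐ_eq_mk,
          Ideal.Quotient.eq_zero_iff_mem.mpr (monomial_mem_ideal_span_monomial_image he hle)]
        exact Submodule.zero_mem _
    · refine Submodule.span_mono ?_
      rintro _ ⟨⟨m, hm⟩, rfl⟩
      refine ⟨_, ⟨m, ?_, rfl⟩, rfl⟩
      simpa [std, Finsupp.degree_eq_sum] using (mem_filter.mp hm).1
  rw [hspan, finrank_span_eq_card hli]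
  simp

end MvPolynomial

namespace SimpleGraph

variable {V : Type*} (G : SimpleGraph V)

theorem isIndepSet_coe_iff {s : Finset V} :
    G.IsIndepSet (s : Set V) ↔ ∀ a ∈ s, ∀ b ∈ s, ¬ G.Adj a b :=
  ⟨fun h _ ha _ hb hab => h ha hb hab.ne hab, fun h a ha b hb _ => h a ha b hb⟩

theorem indepNum_eq_indepNum [Fintype V] : _root_.indepNum G = G.indepNum := by
  simp only [_root_.indepNum, SimpleGraph.indepNum, isNIndepSet_iff, isIndepSet_coe_iff, and_comm]

variable [Fintype V] [DecidableEq V] [DecidableRel G.Adj]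

theorem numIndep_eq_card_indepSetFinset (j : ℕ) : numIndep G j = #(G.indepSetFinset j) := by
  rw [numIndep, ← Set.ncard_coe_finset]
  congr 1
  ext s
  simp [indepSetFinset, isNIndepSet_iff, isIndepSet_coe_iff, and_comm]

theorem numIndep_zero : numIndep G 0 = 1 := by
  rw [numIndep_eq_card_indepSetFinset, card_eq_one]
  refine ⟨∅, ?_⟩
  ext s
  simp only [indepSetFinset, mem_filter, mem_univ, true_and, isNIndepSet_iff, card_eq_zero,
    mem_singleton, and_iff_right_iff_imp]
  rintro rfl
  simp

theorem card_indepSetFinset_indepNum_pos : 0 < #(G.indepSetFinset G.indepNum) := by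
  obtain ⟨s, hs⟩ := G.exists_isNIndepSet_indepNum
  exact card_pos.mpr ⟨s, mem_indepSetFinset_iff.mpr hs⟩

def indepFinsets : Finset (Finset V) := {s | G.IsIndepSet (s : Set V)}

theorem card_le_indepNum_of_mem_indepFinsets {s : Finset V} (hs : s ∈ G.indepFinsets) :
    #s ≤ G.indepNum :=
  IsIndepSet.card_le_indepNum (mem_filter.mp hs).2

theorem filter_indepFinsets_card_eq (j : ℕ) :
    {s ∈ G.indepFinsets | #s = j} = G.indepSetFinset j := by
  ext s
  simp [indepFinsets, indepSetFinset, isNIndepSet_iff]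

theorem sum_indepFinsets_neg_one_pow :
    ∑ s ∈ G.indepFinsets, (-1 : ℤ) ^ #s =
      1 - ∑ j ∈ Icc 1 G.indepNum, (-1 : ℤ) ^ (j - 1) * numIndep G j := by
  rw [← sum_fiberwise_of_maps_to' (g := card) (t := range (G.indepNum + 1)) fun s hs =>
    mem_range.mpr (Nat.lt_succ_of_le (G.card_le_indepNum_of_mem_indepFinsets hs))]
  simp only [sum_const, filter_indepFinsets_card_eq, ← numIndep_eq_card_indepSetFinset,
    nsmul_eq_mul]
  rw [range_eq_Ico, sum_eq_sum_Ico_succ_bot (Nat.succ_pos _), zero_add, Nat.succ_eq_add_one,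
    Ico_add_one_right_eq_Icc, numIndep_zero, sub_eq_add_neg, ← sum_neg_distrib]
  simp only [Nat.cast_one, pow_zero, mul_one]
  refine congrArg _ (sum_congr rfl fun j hj => ?_)
  obtain ⟨i, rfl⟩ := Nat.exists_eq_add_of_le' (mem_Icc.mp hj).1
  simp only [Nat.add_sub_cancel, pow_succ]
  ring

open Polynomial

/-- `∑ᵢ gᵢ tⁱ (1 - t)^(α - i)`, the numerator of `∑ᵢ gᵢ tⁱ / (1 - t)ⁱ` over `(1 - t)^α`. -/
noncomputable def hPolynomial (R : Type*) [CommRing R] : R[X] :=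
  ∑ s ∈ G.indepFinsets, X ^ #s * (1 - X) ^ (G.indepNum - #s)

theorem eval_one_hPolynomial (R : Type*) [CommRing R] :
    (G.hPolynomial R).eval 1 = #(G.indepSetFinset G.indepNum) := by
  simp only [hPolynomial, eval_finsetSum, eval_mul, eval_pow, eval_X, eval_sub, eval_one,
    one_pow, one_mul, sub_self, zero_pow_eq]
  rw [sum_boole]
  congr 2
  ext s
  simp only [indepFinsets, mem_filter, mem_univ, true_and, indepSetFinset, isNIndepSet_iff]
  exact and_congr_right fun hs => by have := hs.card_le_indepNum; omega

theorem natDegree_hPolynomial_le (R : Type*) [CommRing R] :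
    (G.hPolynomial R).natDegree ≤ G.indepNum := by
  refine natDegree_sum_le_of_forall_le _ _ fun s hs => ?_
  have h1X : (1 - X : R[X]).natDegree ≤ 1 :=
    (natDegree_sub_le _ _).trans (by simpa using natDegree_X_le)
  calc (X ^ #s * (1 - X : R[X]) ^ (G.indepNum - #s)).natDegree
      ≤ #s + (G.indepNum - #s) * 1 :=
        natDegree_mul_le_of_le (natDegree_X_pow_le _) (natDegree_pow_le_of_le _ h1X)
    _ = G.indepNum := by have := G.card_le_indepNum_of_mem_indepFinsets hs; omega

theorem neg_one_pow_indepNum_mul_coeff_hPolynomial (R : Type*) [CommRing R] :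
    (-1) ^ G.indepNum * (G.hPolynomial R).coeff G.indepNum = ∑ s ∈ G.indepFinsets, (-1) ^ #s := by
  rw [hPolynomial, finsetSum_coeff, mul_sum]
  refine sum_congr rfl fun s hs => ?_
  have hcard := G.card_le_indepNum_of_mem_indepFinsets hs
  rw [coeff_X_pow_mul', if_pos hcard, coeff_one_sub_X_pow_self,
    neg_one_pow_mul_neg_one_pow_sub hcard]

end SimpleGraph

def edgeExponents {V : Type*} (G : SimpleGraph V) : Set (V →₀ ℕ) :=
  {e | ∃ i j, G.Adj i j ∧ e = Finsupp.single i 1 + Finsupp.single j 1}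

theorem forall_edgeExponents_not_le_iff {V : Type*} (G : SimpleGraph V) {m : V →₀ ℕ} :
    (∀ e ∈ edgeExponents G, ¬ e ≤ m) ↔ G.IsIndepSet (m.support : Set V) := by
  simp only [edgeExponents, Set.mem_ofPred_eq, forall_exists_index, and_imp]
  constructor
  · intro h i hi j hj hij hadj
    exact h _ i j hadj rfl
      ((Finsupp.single_add_single_le_iff hij).mpr ⟨by simpa using hi, by simpa using hj⟩)
  · rintro h _ i j hadj rfl hle
    have := (Finsupp.single_add_single_le_iff hadj.ne).mp hle
    exact h (by simpa using this.1) (by simpa using this.2) hadj.ne hadj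

theorem edgeIdeal_eq_span_monomial (k : Type*) [Field k] {n : ℕ} (G : SimpleGraph (Fin n)) :
    edgeIdeal k G =
      Ideal.span ((fun m => MvPolynomial.monomial m (1 : k)) '' edgeExponents G) := by
  rw [edgeIdeal, edgeExponents]
  congr 1
  ext p
  simp [MvPolynomial.X, MvPolynomial.monomial_mul, eq_comm]

theorem hilbertFunction_eq_card (k : Type*) [Field k] {n : ℕ} (G : SimpleGraph (Fin n))
    [DecidableRel G.Adj] (d : ℕ) :
    hilbertFunction k G d =
      #{m ∈ finsuppAntidiag (univ : Finset (Fin n)) d |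
        G.IsIndepSet (m.support : Set (Fin n))} := by
  classical
  -- `edgeIdeal k G` cannot be rewritten in place: the quotient's instances depend on it.
  have key : ∀ I, I = Ideal.span ((fun m => MvPolynomial.monomial m (1 : k)) '' edgeExponents G) →
      Module.finrank k ((MvPolynomial.homogeneousSubmodule (Fin n) k d).map
        (Ideal.Quotient.mkₐ k I).toLinearMap) =
      #{m ∈ finsuppAntidiag (univ : Finset (Fin n)) d |
        G.IsIndepSet (m.support : Set (Fin n))} := by
    rintro _ rfl
    simpa only [forall_edgeExponents_not_le_iff] using
      MvPolynomial.finrank_map_homogeneousSubmodule_quotient_span_monomial (edgeExponents G) d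
  exact key _ (edgeIdeal_eq_span_monomial k G)

theorem hilbertSeries_eq_sum_indepFinsets (k : Type*) [Field k] {n : ℕ} (G : SimpleGraph (Fin n))
    [DecidableRel G.Adj] :
    hilbertSeries k G = ∑ s ∈ G.indepFinsets, (PowerSeries.X * PowerSeries.mk 1) ^ #s := by
  simp only [hilbertSeries, hilbertFunction_eq_card]
  exact PowerSeries.mk_card_filter_support fun s : Finset (Fin n) => G.IsIndepSet (s : Set (Fin n))

theorem one_sub_X_pow_indepNum_mul_hilbertSeries (k : Type*) [Field k] {n : ℕ}
    (G : SimpleGraph (Fin n)) [DecidableRel G.Adj] :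
    (1 - PowerSeries.X) ^ G.indepNum * hilbertSeries k G = (G.hPolynomial ℚ : PowerSeries ℚ) := by
  rw [hilbertSeries_eq_sum_indepFinsets, mul_sum, SimpleGraph.hPolynomial,
    ← Polynomial.coeToPowerSeries.ringHom_apply, map_sum]
  refine sum_congr rfl fun s hs => ?_
  simp only [map_mul, map_pow, map_sub, map_one, Polynomial.coeToPowerSeries.ringHom_apply,
    Polynomial.coe_X]
  exact PowerSeries.one_sub_X_pow_mul_X_mul_mk_one_pow (G.card_le_indepNum_of_mem_indepFinsets hs)

theorem stmt_14 {k : Type*} [Field k] {n : ℕ} (G : SimpleGraph (Fin n))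
    (h : Polynomial ℚ) (d : ℕ) (h1 : h.eval 1 ≠ 0)
    (heq : (1 - PowerSeries.X) ^ d * hilbertSeries k G = (h : PowerSeries ℚ)) :
    h.natDegree = _root_.indepNum G ↔
      (∑ j ∈ Finset.Icc 1 (_root_.indepNum G), (-1 : ℤ) ^ (j - 1) * numIndep G j) ≠ 1 := by
  classical
  have hP1 : (G.hPolynomial ℚ).eval 1 ≠ 0 := by
    rw [G.eval_one_hPolynomial]
    exact_mod_cast G.card_indepSetFinset_indepNum_pos.ne'
  obtain ⟨rfl, rfl⟩ := PowerSeries.eq_of_one_sub_X_pow_mul_eq h1 hP1 heq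
    (one_sub_X_pow_indepNum_mul_hilbertSeries k G)
  have hcoeff : (-1) ^ G.indepNum * (G.hPolynomial ℚ).coeff G.indepNum =
      ((1 - ∑ j ∈ Icc 1 G.indepNum, (-1 : ℤ) ^ (j - 1) * numIndep G j : ℤ) : ℚ) := by
    rw [G.neg_one_pow_indepNum_mul_coeff_hPolynomial, ← G.sum_indepFinsets_neg_one_pow]
    push_cast
    rfl
  rw [G.indepNum_eq_indepNum, Polynomial.natDegree_eq_iff_coeff_ne_zero
      (fun h0 => hP1 (by rw [h0, Polynomial.eval_zero])) (G.natDegree_hPolynomial_le ℚ),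
    ← mul_ne_zero_iff_left (pow_ne_zero G.indepNum (neg_ne_zero.mpr one_ne_zero)), hcoeff,
    Int.cast_ne_zero, sub_ne_zero, ne_comm]
end
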